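/- Let A, B be real N×N matrices such that B + Bᵀ is positive definite, with b := λ_min((B+Bᵀ)/2) > 0, let f : [0,∞) → ℝ^N be absolutely integrable with bounded cosine Fourier transform F(ω) := ∫_0^∞ f(z) cos(ωz) dz, and let g : [0,∞) → ℝ^N be continuous. With u(z,t) and u_R(z,t) defined as the full and R-truncated inverse cosine Fourier representations u(z,t) = (2/π)(∫_0^∞ exp((A−ω²B)t)F(ω)cos(ωz)dω − ∫_0^∞ ∫_0^t exp((A−ω²B)(t−s)) B g(s) cos(ωz) ds dω) and u_R(z,t) the same with ∫_0^R dω, the convergence u_R(z,t) → u(z,t) as R → ∞ is uniform in z: for each fixed t > 0, sup_{z > 0} ‖u(z,t) − u_R(z,t)‖ → 0 as R → ∞. -/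

import Mathlib

open MeasureTheory Filter Matrix NormedSpace

/-- The largest eigenvalue of a real symmetric matrix (junk value `0` otherwise). -/
noncomputable def lambdaMax {N : ℕ} (S : Matrix (Fin N) (Fin N) ℝ) : ℝ :=
  if h : S.IsHermitian then ⨆ i, h.eigenvalues i else 0

/-- The smallest eigenvalue of a real symmetric matrix (junk value `0` otherwise). -/
noncomputable def lambdaMin {N : ℕ} (S : Matrix (Fin N) (Fin N) ℝ) : ℝ :=
  if h : S.IsHermitian then ⨅ i, h.eigenvalues i else 0

/-- The logarithmic norm `μ(P) = λ_max((P + Pᵀ)/2)` of a real square matrix. -/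
noncomputable def logNorm {N : ℕ} (P : Matrix (Fin N) (Fin N) ℝ) : ℝ :=
  lambdaMax ((1 / 2 : ℝ) • (P + Pᵀ))

/-- The action of a real `N × N` matrix on the Euclidean space `ℝ^N`. -/
noncomputable def matAct {N : ℕ} (M : Matrix (Fin N) (Fin N) ℝ)
    (v : EuclideanSpace ℝ (Fin N)) : EuclideanSpace ℝ (Fin N) :=
  Matrix.toEuclideanLin M v

/-- The operator norm of a real `N × N` matrix, induced by the Euclidean norm on `ℝ^N`. -/
noncomputable def matOpNorm {N : ℕ} (M : Matrix (Fin N) (Fin N) ℝ) : ℝ :=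
  ‖LinearMap.toContinuousLinearMap (Matrix.toEuclideanLin M)‖

/-- The complementary error function `erfc x = (2/√π) ∫_x^∞ e^{-u²} du`. -/
noncomputable def erfc (x : ℝ) : ℝ :=
  (2 / Real.sqrt Real.pi) * ∫ u in Set.Ioi x, Real.exp (-u ^ 2)
/-- The first integral `∫ exp((A-ω²B)t) F(ω) cos(ωz) dω` over the set `s` of frequencies,
where `F` is the cosine Fourier transform of `f`. -/
noncomputable def I₁on {N : ℕ} (A B : Matrix (Fin N) (Fin N) ℝ)
    (f : ℝ → EuclideanSpace ℝ (Fin N)) (z t : ℝ) (s : Set ℝ) : EuclideanSpace ℝ (Fin N) :=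
  ∫ ω in s, Real.cos (ω * z) •
    matAct (exp (t • (A - ω ^ 2 • B))) (∫ x in Set.Ioi (0 : ℝ), Real.cos (ω * x) • f x)

/-- The second integral `∫ (∫_0^t exp((A-ω²B)(t-σ)) B g(σ) cos(ωz) dσ) dω` over the set `s`. -/
noncomputable def I₂on {N : ℕ} (A B : Matrix (Fin N) (Fin N) ℝ)
    (g : ℝ → EuclideanSpace ℝ (Fin N)) (z t : ℝ) (s : Set ℝ) : EuclideanSpace ℝ (Fin N) :=
  ∫ ω in s, ∫ σ in (0 : ℝ)..t,
    Real.cos (ω * z) • matAct (exp ((t - σ) • (A - ω ^ 2 • B))) (matAct B (g σ))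


open RealInnerProductSpace Topology

attribute [local instance] Matrix.linftyOpNormedRing Matrix.linftyOpNormedAlgebra

variable {N : ℕ}

lemma matAct_eigen {S : Matrix (Fin N) (Fin N) ℝ} (hS : S.IsHermitian) (j : Fin N) :
    matAct S (hS.eigenvectorBasis j) = hS.eigenvalues j • hS.eigenvectorBasis j := by
  have := hS.mulVec_eigenvectorBasis j
  simp only [matAct, Matrix.toEuclideanLin_apply]
  apply (WithLp.equiv 2 _).injective
  simpa using this

lemma inner_matAct_le_lambdaMax {S : Matrix (Fin N) (Fin N) ℝ} (hS : S.IsHermitian)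
    (v : EuclideanSpace ℝ (Fin N)) : ⟪matAct S v, v⟫ ≤ lambdaMax S * ‖v‖ ^ 2 := by
  rcases Nat.eq_zero_or_pos N with h0 | hpos
  · subst h0
    have : v = 0 := Subsingleton.elim _ _
    simp [this, matAct]
  have : Nonempty (Fin N) := ⟨⟨0, hpos⟩⟩
  set b := hS.eigenvectorBasis with hbdef
  have hv : v = ∑ j, ⟪b j, v⟫ • b j := (b.sum_repr' v).symm
  have hSv : matAct S v = ∑ j, (hS.eigenvalues j * ⟪b j, v⟫) • b j := by
    conv_lhs => rw [hv]
    simp only [matAct, map_sum]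
    refine Finset.sum_congr rfl fun j _ => ?_
    rw [LinearMap.map_smul, show (Matrix.toEuclideanLin S) (b j) = matAct S (b j) from rfl, matAct_eigen hS j,
      smul_smul, mul_comm]
  have hinner : ⟪matAct S v, v⟫ = ∑ j, hS.eigenvalues j * ⟪b j, v⟫ ^ 2 := by
    rw [hSv, sum_inner]
    refine Finset.sum_congr rfl fun j _ => ?_
    rw [real_inner_smul_left]; ring
  have hnorm : ‖v‖ ^ 2 = ∑ j, ⟪b j, v⟫ ^ 2 := by
    have := b.sum_inner_mul_inner v v
    rw [← real_inner_self_eq_norm_sq, ← this]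
    refine (Finset.sum_congr rfl fun j _ => ?_).symm
    rw [real_inner_comm v (b j)]; ring
  have hle : ∀ j, hS.eigenvalues j ≤ lambdaMax S := by
    intro j
    rw [lambdaMax, dif_pos hS]
    exact le_ciSup (Set.Finite.bddAbove (Set.finite_range _)) j
  rw [hinner, hnorm, Finset.mul_sum]
  exact Finset.sum_le_sum fun j _ =>
    mul_le_mul_of_nonneg_right (hle j) (sq_nonneg _)

lemma lambdaMin_le_inner_matAct {S : Matrix (Fin N) (Fin N) ℝ} (hS : S.IsHermitian)
    (v : EuclideanSpace ℝ (Fin N)) : lambdaMin S * ‖v‖ ^ 2 ≤ ⟪matAct S v, v⟫ := by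
  rcases Nat.eq_zero_or_pos N with h0 | hpos
  · subst h0
    have : v = 0 := Subsingleton.elim _ _
    simp [this, matAct]
  have : Nonempty (Fin N) := ⟨⟨0, hpos⟩⟩
  set b := hS.eigenvectorBasis with hbdef
  have hv : v = ∑ j, ⟪b j, v⟫ • b j := (b.sum_repr' v).symm
  have hSv : matAct S v = ∑ j, (hS.eigenvalues j * ⟪b j, v⟫) • b j := by
    conv_lhs => rw [hv]
    simp only [matAct, map_sum]
    refine Finset.sum_congr rfl fun j _ => ?_
    rw [LinearMap.map_smul, show (Matrix.toEuclideanLin S) (b j) = matAct S (b j) from rfl, matAct_eigen hS j,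
      smul_smul, mul_comm]
  have hinner : ⟪matAct S v, v⟫ = ∑ j, hS.eigenvalues j * ⟪b j, v⟫ ^ 2 := by
    rw [hSv, sum_inner]
    refine Finset.sum_congr rfl fun j _ => ?_
    rw [real_inner_smul_left]; ring
  have hnorm : ‖v‖ ^ 2 = ∑ j, ⟪b j, v⟫ ^ 2 := by
    have := b.sum_inner_mul_inner v v
    rw [← real_inner_self_eq_norm_sq, ← this]
    refine (Finset.sum_congr rfl fun j _ => ?_).symm
    rw [real_inner_comm v (b j)]; ring
  have hle : ∀ j, lambdaMin S ≤ hS.eigenvalues j := by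
    intro j
    rw [lambdaMin, dif_pos hS]
    exact ciInf_le (Set.Finite.bddBelow (Set.finite_range _)) j
  rw [hinner, hnorm, Finset.mul_sum]
  exact Finset.sum_le_sum fun j _ =>
    mul_le_mul_of_nonneg_right (hle j) (sq_nonneg _)

lemma matAct_mul (M P : Matrix (Fin N) (Fin N) ℝ) (v : EuclideanSpace ℝ (Fin N)) :
    matAct (M * P) v = matAct M (matAct P v) := by
  simp [matAct, Matrix.toEuclideanLin_apply, Matrix.mulVec_mulVec]

lemma isHermitian_symPart (P : Matrix (Fin N) (Fin N) ℝ) :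
    ((1 / 2 : ℝ) • (P + Pᵀ)).IsHermitian := by
  have h : (P + Pᵀ).IsHermitian := by
    unfold Matrix.IsHermitian
    rw [Matrix.conjTranspose_eq_transpose_of_trivial, Matrix.transpose_add,
      Matrix.transpose_transpose, add_comm]
  rw [Matrix.IsHermitian] at h ⊢
  rw [Matrix.conjTranspose_smul, h, star_trivial]

lemma inner_matAct_symPart (P : Matrix (Fin N) (Fin N) ℝ) (v : EuclideanSpace ℝ (Fin N)) :
    ⟪matAct P v, v⟫ = ⟪matAct ((1 / 2 : ℝ) • (P + Pᵀ)) v, v⟫ := by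
  have htr : ⟪matAct Pᵀ v, v⟫ = ⟪matAct P v, v⟫ := by
    simp only [matAct, Matrix.toEuclideanLin_apply]
    simp only [PiLp.inner_apply, RCLike.inner_apply, starRingEnd_apply, star_trivial]
    change v.ofLp ⬝ᵥ (Pᵀ *ᵥ v.ofLp) = v.ofLp ⬝ᵥ (P *ᵥ v.ofLp)
    rw [Matrix.mulVec_transpose, dotProduct_comm, Matrix.dotProduct_mulVec]
  have hadd : matAct ((1 / 2 : ℝ) • (P + Pᵀ)) v
      = (1 / 2 : ℝ) • (matAct P v + matAct Pᵀ v) := by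
    simp [matAct, map_add, LinearMap.add_apply]
  rw [hadd, real_inner_smul_left, inner_add_left, htr]
  ring

/-- The evaluation of `matAct` at a fixed vector, as a continuous linear map in the matrix. -/
noncomputable def matActL (v : EuclideanSpace ℝ (Fin N)) :
    Matrix (Fin N) (Fin N) ℝ →L[ℝ] EuclideanSpace ℝ (Fin N) :=
  LinearMap.toContinuousLinearMap
    { toFun := fun M => matAct M v
      map_add' := by intro M P; simp [matAct, map_add, LinearMap.add_apply]
      map_smul' := by intro c M; simp [matAct, LinearMap.map_smul, LinearMap.smul_apply] }

@[simp] lemma matActL_apply (v : EuclideanSpace ℝ (Fin N)) (M : Matrix (Fin N) (Fin N) ℝ) :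
    matActL v M = matAct M v := rfl

lemma norm_matAct_exp_le {P : Matrix (Fin N) (Fin N) ℝ} {μ : ℝ}
    (hμ : ∀ v : EuclideanSpace ℝ (Fin N), ⟪matAct P v, v⟫ ≤ μ * ‖v‖ ^ 2)
    {s : ℝ} (hs : 0 ≤ s) (v : EuclideanSpace ℝ (Fin N)) :
    ‖matAct (exp (s • P)) v‖ ≤ Real.exp (s * μ) * ‖v‖ := by
  set f : ℝ → EuclideanSpace ℝ (Fin N) := fun u => matAct (exp (u • P)) v with hfdef
  have hf : ∀ u : ℝ, HasDerivAt f (matAct P (f u)) u := by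
    intro u
    have h1 := hasDerivAt_exp_smul_const (𝕂 := ℝ) P u
    have h2 := (matActL v).hasFDerivAt.comp_hasDerivAt u h1
    have hc : exp (u • P) * P = P * exp (u • P) :=
      (((Commute.refl P).smul_left u).exp_left).eq
    simp only [Function.comp_def, matActL_apply] at h2
    exact h2.congr_deriv (by show matAct (exp (u • P) * P) v = _; rw [hc, matAct_mul])
  set g : ℝ → ℝ := fun u => ⟪f u, f u⟫ with hgdef
  have hg : ∀ u : ℝ, HasDerivAt g (2 * ⟪matAct P (f u), f u⟫) u := by
    intro u
    have := (hf u).inner ℝ (hf u)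
    exact this.congr_deriv (by rw [real_inner_comm]; ring)
  set φ : ℝ → ℝ := fun u => Real.exp (-(2 * μ) * u) * g u with hφdef
  have hφ : ∀ u : ℝ, HasDerivAt φ
      (-(2 * μ) * Real.exp (-(2 * μ) * u) * g u
        + Real.exp (-(2 * μ) * u) * (2 * ⟪matAct P (f u), f u⟫)) u := by
    intro u
    have := ((((hasDerivAt_id u).const_mul (-(2 * μ)))).exp).mul (hg u)
    exact this.congr_deriv (by simp only [id_eq]; ring)
  have hder_nonpos : ∀ u : ℝ, deriv φ u ≤ 0 := by
    intro u
    rw [(hφ u).deriv]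
    have h1 : ⟪matAct P (f u), f u⟫ ≤ μ * ‖f u‖ ^ 2 := hμ (f u)
    have h2 : g u = ‖f u‖ ^ 2 := real_inner_self_eq_norm_sq (f u)
    have h3 : (0 : ℝ) < Real.exp (-(2 * μ) * u) := Real.exp_pos _
    rw [h2]
    nlinarith [mul_le_mul_of_nonneg_left h1 h3.le]
  have hanti : Antitone φ :=
    antitone_of_deriv_nonpos (fun u => (hφ u).differentiableAt) hder_nonpos
  have hφ0 : φ 0 = ‖v‖ ^ 2 := by
    have hf0 : f 0 = v := by
      simp [hfdef, matAct, Matrix.toEuclideanLin_apply, Matrix.one_mulVec]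
    simp only [hφdef, hgdef, hf0, mul_zero, neg_zero, Real.exp_zero, one_mul,
      real_inner_self_eq_norm_sq]
  have hkey : ‖f s‖ ^ 2 ≤ Real.exp (2 * μ * s) * ‖v‖ ^ 2 := by
    have := hanti hs
    rw [hφ0] at this
    have h2 : g s = ‖f s‖ ^ 2 := real_inner_self_eq_norm_sq (f s)
    have h3 : (0 : ℝ) < Real.exp (-(2 * μ) * s) := Real.exp_pos _
    have h4 : Real.exp (-(2 * μ) * s) * Real.exp (2 * μ * s) = 1 := by
      rw [← Real.exp_add]; ring_nf; exact Real.exp_zero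
    have h5 : Real.exp (-(2 * μ) * s) * g s ≤ ‖v‖ ^ 2 := this
    have h6 : 0 < Real.exp (2 * μ * s) := Real.exp_pos _
    calc ‖f s‖ ^ 2 = g s := h2.symm
      _ = Real.exp (2 * μ * s) * (Real.exp (-(2 * μ) * s) * g s) := by
          rw [← mul_assoc, mul_comm (Real.exp (2 * μ * s)), h4, one_mul]
      _ ≤ Real.exp (2 * μ * s) * ‖v‖ ^ 2 := mul_le_mul_of_nonneg_left h5 h6.le
  have h5 : (Real.exp (s * μ) * ‖v‖) ^ 2 = Real.exp (2 * μ * s) * ‖v‖ ^ 2 := by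
    rw [mul_pow, sq (Real.exp (s * μ)), ← Real.exp_add]
    ring_nf
  have h6 : ‖f s‖ ^ 2 ≤ (Real.exp (s * μ) * ‖v‖) ^ 2 := by rw [h5]; exact hkey
  have h7 : 0 ≤ Real.exp (s * μ) * ‖v‖ := by positivity
  exact (pow_le_pow_iff_left₀ (norm_nonneg _) h7 (by norm_num)).mp h6

/-- `matAct` bundled as a continuous linear map on matrices, valued in CLMs. -/
noncomputable def matActCLM :
    Matrix (Fin N) (Fin N) ℝ →L[ℝ]
      (EuclideanSpace ℝ (Fin N) →L[ℝ] EuclideanSpace ℝ (Fin N)) :=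
  LinearMap.toContinuousLinearMap
    ((LinearMap.toContinuousLinearMap :
        (EuclideanSpace ℝ (Fin N) →ₗ[ℝ] EuclideanSpace ℝ (Fin N)) ≃ₗ[ℝ]
          (EuclideanSpace ℝ (Fin N) →L[ℝ] EuclideanSpace ℝ (Fin N))).toLinearMap
      ∘ₗ (Matrix.toEuclideanLin :
          Matrix (Fin N) (Fin N) ℝ ≃ₗ[ℝ]
            (EuclideanSpace ℝ (Fin N) →ₗ[ℝ] EuclideanSpace ℝ (Fin N))).toLinearMap)

@[simp] lemma matActCLM_apply (M : Matrix (Fin N) (Fin N) ℝ) (v : EuclideanSpace ℝ (Fin N)) :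
    matActCLM M v = matAct M v := rfl

lemma norm_matAct_le (M : Matrix (Fin N) (Fin N) ℝ) (v : EuclideanSpace ℝ (Fin N)) :
    ‖matAct M v‖ ≤ matOpNorm M * ‖v‖ :=
  (LinearMap.toContinuousLinearMap (Matrix.toEuclideanLin M)).le_opNorm v

lemma continuous_matAct {X : Type*} [TopologicalSpace X]
    {M : X → Matrix (Fin N) (Fin N) ℝ} {w : X → EuclideanSpace ℝ (Fin N)}
    (hM : Continuous M) (hw : Continuous w) :
    Continuous fun x => matAct (M x) (w x) :=
  (matActCLM.continuous.comp hM).clm_apply hw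

lemma continuousOn_matAct {X : Type*} [TopologicalSpace X] {s : Set X}
    {M : X → Matrix (Fin N) (Fin N) ℝ} {w : X → EuclideanSpace ℝ (Fin N)}
    (hM : Continuous M) (hw : ContinuousOn w s) :
    ContinuousOn (fun x => matAct (M x) (w x)) s := by
  have h := isBoundedBilinearMap_apply.continuous.comp_continuousOn
    (((matActCLM.continuous.comp hM).continuousOn).prodMk hw)
  exact h

lemma norm_matAct_exp_sub_le {A B : Matrix (Fin N) (Fin N) ℝ} {μA b : ℝ}
    (hA : ∀ v : EuclideanSpace ℝ (Fin N), ⟪matAct A v, v⟫ ≤ μA * ‖v‖ ^ 2)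
    (hB : ∀ v : EuclideanSpace ℝ (Fin N), b * ‖v‖ ^ 2 ≤ ⟪matAct B v, v⟫)
    (ω : ℝ) {s : ℝ} (hs : 0 ≤ s) (w : EuclideanSpace ℝ (Fin N)) :
    ‖matAct (exp (s • (A - ω ^ 2 • B))) w‖ ≤ Real.exp (s * (μA - ω ^ 2 * b)) * ‖w‖ := by
  apply norm_matAct_exp_le _ hs
  intro v
  have h1 := hA v
  have h2 := hB v
  have hsub : matAct (A - ω ^ 2 • B) v = matAct A v - ω ^ 2 • matAct B v := by
    simp [matAct, map_sub, LinearMap.sub_apply, LinearMap.map_smul, LinearMap.smul_apply]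
  rw [hsub, inner_sub_left, real_inner_smul_left]
  nlinarith [mul_le_mul_of_nonneg_left h2 (sq_nonneg ω)]

lemma exp_le_C0 {μA b s t ω : ℝ} (hb : 0 < b) (hs : 0 ≤ s) (hst : s ≤ t) :
    Real.exp (s * (μA - ω ^ 2 * b)) ≤ Real.exp (t * max μA 0) := by
  apply Real.exp_le_exp.2
  have h1 : s * μA ≤ s * max μA 0 := mul_le_mul_of_nonneg_left (le_max_left _ _) hs
  have h2 : s * max μA 0 ≤ t * max μA 0 :=
    mul_le_mul_of_nonneg_right hst (le_max_right _ _)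
  nlinarith [mul_nonneg (mul_nonneg hs (sq_nonneg ω)) hb.le]

lemma integral_exp_Ioc_le {c t : ℝ} (hc : 0 < c) (ht : 0 < t) :
    ∫ σ in Set.Ioc (0 : ℝ) t, Real.exp ((σ - t) * c) ≤ 1 / c := by
  have h0 : ∫ σ in Set.Ioc (0 : ℝ) t, Real.exp ((σ - t) * c)
      = ∫ σ in (0 : ℝ)..t, Real.exp ((σ - t) * c) :=
    (intervalIntegral.integral_of_le ht.le).symm
  have hderiv : ∀ σ ∈ Set.uIcc (0 : ℝ) t,
      HasDerivAt (fun σ => Real.exp ((σ - t) * c) / c) (Real.exp ((σ - t) * c)) σ := by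
    intro σ _
    have h1 : HasDerivAt (fun σ : ℝ => (σ - t) * c) (1 * c) σ :=
      ((hasDerivAt_id σ).sub_const t).mul_const c
    have h2 := (h1.exp).div_const c
    exact h2.congr_deriv (by rw [one_mul, mul_div_cancel_right₀ _ hc.ne'])
  have hii : IntervalIntegrable (fun σ => Real.exp ((σ - t) * c)) volume 0 t :=
    (Real.continuous_exp.comp ((continuous_id.sub continuous_const).mul
      continuous_const)).intervalIntegrable 0 t
  rw [h0, intervalIntegral.integral_eq_sub_of_hasDerivAt hderiv hii]
  have h3 : (0 : ℝ) < Real.exp ((0 - t) * c) / c := by positivity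
  have h4 : Real.exp ((t - t) * c) = 1 := by simp
  rw [h4]
  linarith

set_option maxHeartbeats 2000000 in
theorem stmt9 {N : ℕ} (A B : Matrix (Fin N) (Fin N) ℝ)
    (hBpd : (B + Bᵀ).PosDef)
    (b : ℝ) (hb : b = lambdaMin ((1 / 2 : ℝ) • (B + Bᵀ))) (hbpos : 0 < b)
    (f g : ℝ → EuclideanSpace ℝ (Fin N))
    (hf : IntegrableOn f (Set.Ioi 0))
    (hFbdd : BddAbove (Set.range fun ω : Set.Ici (0 : ℝ) =>
      ‖∫ x in Set.Ioi (0 : ℝ), Real.cos (ω * x) • f x‖))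
    (hg : ContinuousOn g (Set.Ici 0))
    (t : ℝ) (ht : 0 < t) :
    TendstoUniformlyOn
      (fun R : ℝ => fun z : ℝ =>
        (2 / Real.pi) • (I₁on A B f z t (Set.Ioc 0 R) - I₂on A B g z t (Set.Ioc 0 R)))
      (fun z : ℝ =>
        (2 / Real.pi) • (I₁on A B f z t (Set.Ioi 0) - I₂on A B g z t (Set.Ioi 0)))
      atTop (Set.Ioi 0) := by
  classical
  -- abbreviations
  set μA : ℝ := logNorm A with hμAdef
  set F : ℝ → EuclideanSpace ℝ (Fin N) :=
    fun ω => ∫ x in Set.Ioi (0 : ℝ), Real.cos (ω * x) • f x with hFdef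
  obtain ⟨CF, hCF⟩ := hFbdd
  have hCF' : ∀ ω : ℝ, 0 ≤ ω → ‖F ω‖ ≤ CF := fun ω hω =>
    hCF ⟨⟨ω, hω⟩, rfl⟩
  -- Rayleigh bounds
  have hAray : ∀ v : EuclideanSpace ℝ (Fin N), ⟪matAct A v, v⟫ ≤ μA * ‖v‖ ^ 2 := by
    intro v
    rw [inner_matAct_symPart]
    exact inner_matAct_le_lambdaMax (isHermitian_symPart A) v
  have hBray : ∀ v : EuclideanSpace ℝ (Fin N), b * ‖v‖ ^ 2 ≤ ⟪matAct B v, v⟫ := by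
    intro v
    rw [inner_matAct_symPart, hb]
    exact lambdaMin_le_inner_matAct (isHermitian_symPart B) v
  have hexp : ∀ (ω s : ℝ), 0 ≤ s → ∀ w : EuclideanSpace ℝ (Fin N),
      ‖matAct (exp (s • (A - ω ^ 2 • B))) w‖ ≤ Real.exp (s * (μA - ω ^ 2 * b)) * ‖w‖ :=
    fun ω s hs w => norm_matAct_exp_sub_le hAray hBray ω hs w
  set C0 : ℝ := Real.exp (t * max μA 0) with hC0def
  have hC0pos : 0 < C0 := Real.exp_pos _
  have hC0 : ∀ (ω s : ℝ), 0 ≤ s → s ≤ t →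
      Real.exp (s * (μA - ω ^ 2 * b)) ≤ C0 := fun ω s hs hst => exp_le_C0 hbpos hs hst
  -- bound on g
  obtain ⟨Cg, hCg⟩ : ∃ C, ∀ σ ∈ Set.Icc (0 : ℝ) t, ‖g σ‖ ≤ C :=
    isCompact_Icc.exists_bound_of_continuousOn (hg.mono fun x hx => hx.1)
  set K : ℝ := matOpNorm B * Cg with hKdef
  have hK : ∀ σ ∈ Set.Icc (0 : ℝ) t, ‖matAct B (g σ)‖ ≤ K := by
    intro σ hσ
    refine (norm_matAct_le B (g σ)).trans ?_
    exact mul_le_mul_of_nonneg_left (hCg σ hσ) (norm_nonneg _)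
  have hKnn : 0 ≤ K := (norm_nonneg _).trans (hK 0 ⟨le_rfl, ht.le⟩)
  -- continuity of F
  have hFcont : Continuous F := by
    refine continuous_of_dominated
      (fun ω => (Continuous.aestronglyMeasurable (f := fun x : ℝ => Real.cos (ω * x)) ?_).smul hf.1)
      (fun ω => ae_of_all _ fun x => ?_) hf.norm (ae_of_all _ fun x => ?_)
    · exact Real.continuous_cos.comp (continuous_const.mul continuous_id)
    · rw [norm_smul]
      have : ‖Real.cos (ω * x)‖ ≤ 1 := by
        rw [Real.norm_eq_abs]; exact Real.abs_cos_le_one _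
      nlinarith [norm_nonneg (f x)]
    · exact (Real.continuous_cos.comp (continuous_id.mul continuous_const)).smul
        continuous_const
  -- continuity of matrix exponential families
  have hexpcont : ∀ s : ℝ, Continuous fun ω : ℝ => exp (s • (A - ω ^ 2 • B)) := by
    intro s
    exact exp_continuous.comp
      ((continuous_const.sub ((continuous_pow 2).smul continuous_const)).const_smul s)
  have hexpcontσ : ∀ ω : ℝ, Continuous fun σ : ℝ => exp ((t - σ) • (A - ω ^ 2 • B)) := by
    intro ω
    exact exp_continuous.comp ((continuous_const.sub continuous_id).smul continuous_const)
  -- the two integrands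
  set Φ₁ : ℝ → ℝ → EuclideanSpace ℝ (Fin N) :=
    fun z ω => Real.cos (ω * z) • matAct (exp (t • (A - ω ^ 2 • B))) (F ω) with hΦ₁def
  set ψ : ℝ → ℝ → ℝ → EuclideanSpace ℝ (Fin N) :=
    fun z ω σ => Real.cos (ω * z) •
      matAct (exp ((t - σ) • (A - ω ^ 2 • B))) (matAct B (g σ)) with hψdef
  set Φ₂ : ℝ → ℝ → EuclideanSpace ℝ (Fin N) :=
    fun z ω => ∫ σ in Set.Ioc (0 : ℝ) t, ψ z ω σ with hΦ₂def
  have hI₁ : ∀ z (s : Set ℝ), I₁on A B f z t s = ∫ ω in s, Φ₁ z ω := fun z s => rfl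
  have hI₂ : ∀ z (s : Set ℝ), I₂on A B g z t s = ∫ ω in s, Φ₂ z ω := by
    intro z s
    unfold I₂on
    refine integral_congr_ae (ae_of_all _ fun ω => ?_)
    show (∫ σ in (0 : ℝ)..t,
        Real.cos (ω * z) • matAct (exp ((t - σ) • (A - ω ^ 2 • B))) (matAct B (g σ)))
      = Φ₂ z ω
    rw [intervalIntegral.integral_of_le ht.le]
  -- measurability of ψ in σ
  have hψmeas : ∀ z ω, AEStronglyMeasurable (fun σ => ψ z ω σ)
      (volume.restrict (Set.Ioc 0 t)) := by
    intro z ω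
    refine ContinuousOn.aestronglyMeasurable ?_ measurableSet_Ioc
    refine ContinuousOn.const_smul (g := fun σ => matAct (exp ((t - σ) • (A - ω ^ 2 • B))) (matAct B (g σ))) ?_ (Real.cos (ω * z))
    exact continuousOn_matAct (hexpcontσ ω)
      ((matActCLM B).continuous.comp_continuousOn
        (hg.mono fun σ hσ => le_of_lt hσ.1))
  -- pointwise bound on ψ
  have hψbdd : ∀ z ω, ∀ σ ∈ Set.Ioc (0 : ℝ) t,
      ‖ψ z ω σ‖ ≤ Real.exp ((t - σ) * (μA - ω ^ 2 * b)) * K := by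
    intro z ω σ hσ
    simp only [hψdef]
    rw [norm_smul]
    have h1 : ‖Real.cos (ω * z)‖ ≤ 1 := by
      rw [Real.norm_eq_abs]; exact Real.abs_cos_le_one _
    have h2 : ‖matAct (exp ((t - σ) • (A - ω ^ 2 • B))) (matAct B (g σ))‖
        ≤ Real.exp ((t - σ) * (μA - ω ^ 2 * b)) * ‖matAct B (g σ)‖ :=
      hexp ω (t - σ) (by linarith [hσ.2]) _
    have h3 : ‖matAct B (g σ)‖ ≤ K := hK σ ⟨hσ.1.le, hσ.2⟩
    have h4 := Real.exp_pos ((t - σ) * (μA - ω ^ 2 * b))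
    nlinarith [norm_nonneg (matAct (exp ((t - σ) • (A - ω ^ 2 • B))) (matAct B (g σ))),
      norm_nonneg (matAct B (g σ))]
  have hψbddC : ∀ z ω, ∀ σ ∈ Set.Ioc (0 : ℝ) t, ‖ψ z ω σ‖ ≤ C0 * K := by
    intro z ω σ hσ
    refine (hψbdd z ω σ hσ).trans ?_
    exact mul_le_mul_of_nonneg_right (hC0 ω (t - σ) (by linarith [hσ.2]) (by linarith [hσ.1])) hKnn
  -- continuity of Φ₁ z and Φ₂ z
  have hΦ₁cont : ∀ z, Continuous (Φ₁ z) := by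
    intro z
    exact (Real.continuous_cos.comp (continuous_id.mul continuous_const)).smul
      (continuous_matAct (hexpcont t) hFcont)
  have hΦ₂cont : ∀ z, Continuous (Φ₂ z) := by
    intro z
    refine continuous_of_dominated (fun ω => hψmeas z ω)
      (fun ω => (ae_restrict_iff' measurableSet_Ioc).2 (ae_of_all _ fun σ hσ =>
        hψbddC z ω σ hσ))
      (integrableOn_const measure_Ioc_lt_top.ne)
      (ae_of_all _ fun σ => ?_)
    exact (Real.continuous_cos.comp (continuous_id.mul continuous_const)).smul
      (continuous_matAct (hexpcont (t - σ)) continuous_const)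
  -- the scalar majorant q
  set q : ℝ → ℝ := fun ω => ∫ σ in Set.Ioc (0 : ℝ) t,
    Real.exp ((t - σ) * (μA - ω ^ 2 * b)) with hqdef
  have hqexpcont : ∀ ω : ℝ, Continuous fun σ : ℝ =>
      Real.exp ((t - σ) * (μA - ω ^ 2 * b)) := by
    intro ω
    exact Real.continuous_exp.comp ((continuous_const.sub continuous_id).mul continuous_const)
  have hqint_inner : ∀ ω : ℝ, IntegrableOn
      (fun σ => Real.exp ((t - σ) * (μA - ω ^ 2 * b))) (Set.Ioc 0 t) :=
    fun ω => (hqexpcont ω).integrableOn_Ioc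
  have hqnn : ∀ ω, 0 ≤ q ω := fun ω =>
    setIntegral_nonneg measurableSet_Ioc fun σ _ => (Real.exp_pos _).le
  have hqcont : Continuous q := by
    refine continuous_of_dominated (bound := fun _ => C0)
      (fun ω => ((hqexpcont ω).aestronglyMeasurable).restrict)
      (fun ω => (ae_restrict_iff' measurableSet_Ioc).2 (ae_of_all _ fun σ hσ => ?_))
      (integrableOn_const measure_Ioc_lt_top.ne)
      (ae_of_all _ fun σ => ?_)
    · rw [Real.norm_eq_abs, abs_of_pos (Real.exp_pos _)]
      exact hC0 ω (t - σ) (by linarith [hσ.2]) (by linarith [hσ.1])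
    · exact Real.continuous_exp.comp (continuous_const.mul
        (continuous_const.sub ((continuous_pow 2).mul continuous_const)))
  -- bound on Φ₂
  have hΦ₂bdd : ∀ z ω, ‖Φ₂ z ω‖ ≤ q ω * K := by
    intro z ω
    rw [hΦ₂def]
    have h1 : ‖∫ σ in Set.Ioc (0 : ℝ) t, ψ z ω σ‖
        ≤ ∫ σ in Set.Ioc (0 : ℝ) t, Real.exp ((t - σ) * (μA - ω ^ 2 * b)) * K :=
      norm_integral_le_of_norm_le ((hqint_inner ω).mul_const K)
        ((ae_restrict_iff' measurableSet_Ioc).2 (ae_of_all _ fun σ hσ => hψbdd z ω σ hσ))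
    rw [integral_mul_const] at h1
    exact h1
  -- q is dominated by C0 * min t (1/(b ω²))
  have hqle : ∀ ω : ℝ, ω ∈ Set.Ioi (0 : ℝ) → q ω ≤ C0 * min t (1 / (b * ω ^ 2)) := by
    intro ω hω
    have hω' : (0 : ℝ) < ω := hω
    have hbω : 0 < b * ω ^ 2 := mul_pos hbpos (pow_pos hω' 2)
    have hle1 : q ω ≤ C0 * t := by
      have := setIntegral_mono_on (hqint_inner ω)
        (integrableOn_const measure_Ioc_lt_top.ne)
        measurableSet_Ioc
        (fun σ hσ => hC0 ω (t - σ) (by linarith [hσ.2]) (by linarith [hσ.1]))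
      rw [setIntegral_const, Real.volume_real_Ioc_of_le ht.le, smul_eq_mul] at this
      rw [sub_zero] at this
      linarith
    have hle2 : q ω ≤ C0 * (1 / (b * ω ^ 2)) := by
      have hpt : ∀ σ ∈ Set.Ioc (0 : ℝ) t,
          Real.exp ((t - σ) * (μA - ω ^ 2 * b))
            ≤ C0 * Real.exp ((σ - t) * (b * ω ^ 2)) := by
        intro σ hσ
        rw [hC0def, ← Real.exp_add]
        apply Real.exp_le_exp.2
        have h1 : (t - σ) * μA ≤ t * max μA 0 := by
          have h2 : (t - σ) * μA ≤ (t - σ) * max μA 0 :=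
            mul_le_mul_of_nonneg_left (le_max_left _ _) (by linarith [hσ.2])
          have h3 : (t - σ) * max μA 0 ≤ t * max μA 0 :=
            mul_le_mul_of_nonneg_right (by linarith [hσ.1]) (le_max_right _ _)
          linarith
        nlinarith []
      have := setIntegral_mono_on (hqint_inner ω)
        (((Real.continuous_exp.comp ((continuous_id.sub continuous_const).mul
          continuous_const)).integrableOn_Ioc).const_mul C0)
        measurableSet_Ioc hpt
      rw [integral_const_mul] at this
      refine this.trans ?_
      exact mul_le_mul_of_nonneg_left
        ((integral_exp_Ioc_le hbω ht)) hC0pos.le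
    rcases le_total t (1 / (b * ω ^ 2)) with hc | hc
    · rw [min_eq_left hc]; exact hle1
    · rw [min_eq_right hc]; exact hle2
  -- integrability of majorants on (0, ∞)
  set h₁ : ℝ → ℝ := fun ω => Real.exp (t * (μA - ω ^ 2 * b)) * CF with hh₁def
  have hΦ₁bdd : ∀ z, ∀ ω ∈ Set.Ioi (0 : ℝ), ‖Φ₁ z ω‖ ≤ h₁ ω := by
    intro z ω hω
    simp only [hΦ₁def, hh₁def]
    rw [norm_smul]
    have h1 : ‖Real.cos (ω * z)‖ ≤ 1 := by
      rw [Real.norm_eq_abs]; exact Real.abs_cos_le_one _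
    have h2 := hexp ω t ht.le (F ω)
    have h3 := hCF' ω (le_of_lt hω)
    have h4 := Real.exp_pos (t * (μA - ω ^ 2 * b))
    nlinarith [norm_nonneg (matAct (exp (t • (A - ω ^ 2 • B))) (F ω)),
      norm_nonneg (F ω)]
  have hh₁int : IntegrableOn h₁ (Set.Ioi 0) := by
    have : h₁ = fun ω => (Real.exp (t * μA) * Real.exp (-(t * b) * ω ^ 2)) * CF := by
      funext ω
      rw [hh₁def, ← Real.exp_add]
      ring_nf
    rw [this]
    exact (((integrable_exp_neg_mul_sq (mul_pos ht hbpos)).const_mul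
      (Real.exp (t * μA))).mul_const CF).integrableOn
  have hCFnn : 0 ≤ CF := (norm_nonneg (F 0)).trans (hCF' 0 le_rfl)
  have hh₁nn : ∀ ω, 0 ≤ h₁ ω := fun ω => mul_nonneg (Real.exp_pos _).le hCFnn
  -- integrability of min t (1/(b ω²))
  have hminmeas : AEStronglyMeasurable (fun ω : ℝ => min t (1 / (b * ω ^ 2))) volume := by
    apply Measurable.aestronglyMeasurable
    apply Measurable.min measurable_const
    exact (measurable_const.div ((measurable_id.pow_const 2).const_mul b))
  have hminint : IntegrableOn (fun ω : ℝ => min t (1 / (b * ω ^ 2))) (Set.Ioi 0) := by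
    rw [show Set.Ioi (0 : ℝ) = Set.Ioc 0 1 ∪ Set.Ioi 1 from
      (Set.Ioc_union_Ioi_eq_Ioi zero_le_one).symm]
    apply IntegrableOn.union
    · refine Integrable.mono'
        (show Integrable (fun _ : ℝ => t) (volume.restrict (Set.Ioc (0 : ℝ) 1)) from
          integrableOn_const measure_Ioc_lt_top.ne)
        (hminmeas.restrict) ((ae_restrict_iff' measurableSet_Ioc).2
          (ae_of_all _ fun ω hω => ?_))
      rw [Real.norm_eq_abs, abs_of_nonneg (le_min ht.le (by positivity))]
      exact min_le_left _ _
    · refine Integrable.mono'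
        (((integrableOn_Ioi_rpow_of_lt (show (-2 : ℝ) < -1 by norm_num) one_pos).const_mul
          b⁻¹))
        (hminmeas.restrict) ((ae_restrict_iff' measurableSet_Ioi).2
          (ae_of_all _ fun ω hω => ?_))
      have hω1 : (1 : ℝ) < ω := hω
      have hωpos : (0 : ℝ) < ω := lt_trans one_pos hω1
      rw [Real.norm_eq_abs, abs_of_nonneg (le_min ht.le (by positivity))]
      refine (min_le_right _ _).trans (le_of_eq ?_)
      rw [Real.rpow_neg hωpos.le]
      rw [show ((2 : ℝ)) = ((2 : ℕ) : ℝ) by norm_num, Real.rpow_natCast]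
      field_simp
  have hqKint : IntegrableOn (fun ω => q ω * K) (Set.Ioi 0) := by
    refine Integrable.mono' (((hminint.const_mul C0).mul_const K))
      ((hqcont.mul continuous_const).aestronglyMeasurable.restrict)
      ((ae_restrict_iff' measurableSet_Ioi).2 (ae_of_all _ fun ω hω => ?_))
    rw [Real.norm_eq_abs, abs_of_nonneg (mul_nonneg (hqnn ω) hKnn)]
    exact mul_le_mul_of_nonneg_right (hqle ω hω) hKnn
  have hΦ₁int : ∀ z, IntegrableOn (Φ₁ z) (Set.Ioi 0) := by
    intro z
    exact Integrable.mono' hh₁int ((hΦ₁cont z).aestronglyMeasurable.restrict)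
      ((ae_restrict_iff' measurableSet_Ioi).2 (ae_of_all _ fun ω hω => hΦ₁bdd z ω hω))
  have hΦ₂int : ∀ z, IntegrableOn (Φ₂ z) (Set.Ioi 0) := by
    intro z
    exact Integrable.mono' hqKint ((hΦ₂cont z).aestronglyMeasurable.restrict)
      ((ae_restrict_iff' measurableSet_Ioi).2 (ae_of_all _ fun ω _ => hΦ₂bdd z ω))
  -- the total majorant
  set H : ℝ → ℝ := fun ω => h₁ ω + q ω * K with hHdef
  have hHint : IntegrableOn H (Set.Ioi 0) := hh₁int.add hqKint
  -- tail of H tends to zero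
  have htail : Tendsto (fun R => (∫ ω in Set.Ioi (0 : ℝ), H ω)
      - ∫ ω in Set.Ioc (0 : ℝ) R, H ω) atTop (𝓝 0) := by
    have h1 := intervalIntegral_tendsto_integral_Ioi 0 hHint tendsto_id
    have h2 : Tendsto (fun R => ∫ ω in Set.Ioc (0 : ℝ) R, H ω) atTop
        (𝓝 (∫ ω in Set.Ioi (0 : ℝ), H ω)) := by
      refine h1.congr' ?_
      filter_upwards [eventually_ge_atTop (0 : ℝ)] with R hR
      exact intervalIntegral.integral_of_le hR
    have h3 := (tendsto_const_nhds (x := ∫ ω in Set.Ioi (0 : ℝ), H ω)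
      (f := atTop (α := ℝ))).sub h2
    simpa using h3
  have htail2 : Tendsto (fun R => (2 / Real.pi) * ((∫ ω in Set.Ioi (0 : ℝ), H ω)
      - ∫ ω in Set.Ioc (0 : ℝ) R, H ω)) atTop (𝓝 0) := by
    simpa using htail.const_mul (2 / Real.pi)
  -- main estimate
  rw [Metric.tendstoUniformlyOn_iff]
  intro ε hε
  filter_upwards [htail2.eventually (gt_mem_nhds hε), eventually_gt_atTop (0 : ℝ)]
    with R hR hR0
  intro z hz
  have hsub1 : Set.Ioc (0 : ℝ) R ⊆ Set.Ioi 0 := Set.Ioc_subset_Ioi_self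
  have hsub2 : Set.Ioi R ⊆ Set.Ioi (0 : ℝ) := Set.Ioi_subset_Ioi hR0.le
  have hunion : Set.Ioc (0 : ℝ) R ∪ Set.Ioi R = Set.Ioi 0 :=
    Set.Ioc_union_Ioi_eq_Ioi hR0.le
  have hdisj : Disjoint (Set.Ioc (0 : ℝ) R) (Set.Ioi R) := Set.Ioc_disjoint_Ioi le_rfl
  have hsplit : ∀ (φ : ℝ → EuclideanSpace ℝ (Fin N)), IntegrableOn φ (Set.Ioi 0) →
      ∫ ω in Set.Ioi (0 : ℝ), φ ω
        = (∫ ω in Set.Ioc (0 : ℝ) R, φ ω) + ∫ ω in Set.Ioi R, φ ω := by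
    intro φ hφ
    rw [← hunion]
    exact setIntegral_union hdisj measurableSet_Ioi
      (hφ.mono_set (hunion ▸ Set.subset_union_left))
      (hφ.mono_set (hunion ▸ Set.subset_union_right))
  have hsplitH : ∫ ω in Set.Ioi (0 : ℝ), H ω
      = (∫ ω in Set.Ioc (0 : ℝ) R, H ω) + ∫ ω in Set.Ioi R, H ω := by
    rw [← hunion]
    exact setIntegral_union hdisj measurableSet_Ioi
      (hHint.mono_set (hunion ▸ Set.subset_union_left))
      (hHint.mono_set (hunion ▸ Set.subset_union_right))
  -- rewrite the difference as a tail integral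
  have hdiff : (2 / Real.pi) • (I₁on A B f z t (Set.Ioi 0) - I₂on A B g z t (Set.Ioi 0))
      - (2 / Real.pi) • (I₁on A B f z t (Set.Ioc 0 R) - I₂on A B g z t (Set.Ioc 0 R))
      = (2 / Real.pi) • ((∫ ω in Set.Ioi R, Φ₁ z ω) - ∫ ω in Set.Ioi R, Φ₂ z ω) := by
    rw [hI₁, hI₁, hI₂, hI₂, hsplit (Φ₁ z) (hΦ₁int z), hsplit (Φ₂ z) (hΦ₂int z), ← smul_sub]
    congr 1
    abel
  have hb1 : ‖∫ ω in Set.Ioi R, Φ₁ z ω‖ ≤ ∫ ω in Set.Ioi R, h₁ ω :=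
    norm_integral_le_of_norm_le (hh₁int.mono_set hsub2)
      ((ae_restrict_iff' measurableSet_Ioi).2 (ae_of_all _ fun ω hω =>
        hΦ₁bdd z ω (hsub2 hω)))
  have hb2 : ‖∫ ω in Set.Ioi R, Φ₂ z ω‖ ≤ ∫ ω in Set.Ioi R, q ω * K :=
    norm_integral_le_of_norm_le (hqKint.mono_set hsub2)
      ((ae_restrict_iff' measurableSet_Ioi).2 (ae_of_all _ fun ω _ => hΦ₂bdd z ω))
  have hHtail : (∫ ω in Set.Ioi R, h₁ ω) + (∫ ω in Set.Ioi R, q ω * K)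
      = ∫ ω in Set.Ioi R, H ω := by
    rw [hHdef, ← integral_add (hh₁int.mono_set hsub2) (hqKint.mono_set hsub2)]
  have hπ : (0 : ℝ) < 2 / Real.pi := by positivity
  rw [dist_eq_norm, hdiff, norm_smul, Real.norm_eq_abs, abs_of_pos hπ]
  calc (2 / Real.pi) * ‖(∫ ω in Set.Ioi R, Φ₁ z ω) - ∫ ω in Set.Ioi R, Φ₂ z ω‖
      ≤ (2 / Real.pi) * ((∫ ω in Set.Ioi R, h₁ ω) + ∫ ω in Set.Ioi R, q ω * K) := by
        refine mul_le_mul_of_nonneg_left ?_ hπ.le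
        exact (norm_sub_le _ _).trans (add_le_add hb1 hb2)
    _ = (2 / Real.pi) * ((∫ ω in Set.Ioi (0 : ℝ), H ω) - ∫ ω in Set.Ioc (0 : ℝ) R, H ω) := by
        rw [hHtail, hsplitH]; ring
    _ < ε := hR
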